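/- Let k have characteristic zero, m ≥ 2, and on k[x_1,…,x_{2m}] let D(x_j) = (2m-j)·x_{j+1} for j < 2m, D(x_{2m}) = 0, f' = (1/2)·∑_{i=1}^{2m-1} (-1)^{i-1}·C(2m-2, i-1)·x_i·x_{2m-i}, and σ the automorphism with σ(x_i) = x_{2m-i+1}. Then D^2(f') = 2·σ(f'). -/
import Mathlib


open MvPolynomial Finset

noncomputable def Y (k : Type*) [CommSemiring k] (N j : ℕ) : MvPolynomial (Fin N) k :=
  if h : j < N then X ⟨j, h⟩ else 0

theorem D_sq_f'_eq (k : Type*) [Field k] [CharZero k] (m : ℕ) (hm : 2 ≤ m)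
    (D : Derivation k (MvPolynomial (Fin (2*m)) k) (MvPolynomial (Fin (2*m)) k))
    (hD : ∀ j : Fin (2*m), D (X j) =
      if h : (j : ℕ) + 1 < 2*m then ((2*m) - ((j : ℕ) + 1)) • X (⟨(j : ℕ) + 1, h⟩ : Fin (2*m)) else 0)
    (σ : MvPolynomial (Fin (2*m)) k ≃ₐ[k] MvPolynomial (Fin (2*m)) k)
    (hσ : ∀ i : Fin (2*m), σ (X i) = X i.rev)
    (f' : MvPolynomial (Fin (2*m)) k)
    (hf' : f' = (2:k)⁻¹ • ∑ i : Fin (2*m),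
      (((-1:k) ^ (i : ℕ)) * (Nat.choose (2*m-2) (i : ℕ) : k)) •
        (X i * X (⟨2*m-2-(i : ℕ), by omega⟩ : Fin (2*m)))) :
    (⇑D)^[2] f' = 2 • σ f' := by
  obtain ⟨n, hn⟩ : ∃ n, 2*m = n + 2 := ⟨2*m-2, by omega⟩
  set y : ℕ → MvPolynomial (Fin (2*m)) k := Y k (2*m) with hy_def
  have hylt : ∀ (j : ℕ) (h : j < 2*m), y j = X ⟨j, h⟩ := fun j h => dif_pos h
  have hyge : ∀ (j : ℕ), 2*m ≤ j → y j = 0 := fun j h => dif_neg (not_lt.2 h)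
  -- derivative of y
  have hDy : ∀ j, D (y j) = ((n + 1 - j : ℕ) : k) • y (j + 1) := by
    intro j
    by_cases h : j < 2*m
    · rw [hylt j h, hD ⟨j, h⟩]
      simp only
      by_cases h' : j + 1 < 2*m
      · rw [dif_pos h', hylt (j+1) h', ← Nat.cast_smul_eq_nsmul k]
        congr 2
        omega
      · rw [dif_neg h']
        have h0 : n + 1 - j = 0 := by omega
        rw [h0]
        simp
    · rw [hyge j (le_of_not_gt h), hyge (j+1) (by omega), map_zero, smul_zero]
  -- derivative of products
  have hDyy : ∀ a b : ℕ, D (y a * y b) =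
      ((n + 1 - a : ℕ) : k) • (y (a+1) * y b) + ((n + 1 - b : ℕ) : k) • (y a * y (b+1)) := by
    intro a b
    rw [Derivation.leibniz, hDy, hDy]
    simp only [smul_eq_mul, smul_eq_C_mul]
    ring
  set Q : ℕ → MvPolynomial (Fin (2*m)) k := fun i => y (i+1) * y (n+1-i) with hQ_def
  set R : ℕ → MvPolynomial (Fin (2*m)) k := fun i => y i * y (n+2-i) with hR_def
  set c : ℕ → k := fun i => (-1:k)^i * (n.choose i : k) with hc_def
  set a1 : ℕ → k := fun i => ((n+1-i : ℕ) : k) * ((n-i : ℕ) : k) with ha1_def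
  set a2 : ℕ → k := fun i => 2 * ((n+1-i : ℕ) : k) * ((i+1 : ℕ) : k) with ha2_def
  set a3 : ℕ → k := fun i => ((i+1 : ℕ) : k) * ((i : ℕ) : k) with ha3_def
  -- second derivative of the basic terms
  have hD2 : ∀ i : ℕ, i ≤ n → D (D (y i * y (n - i))) =
      a1 i • Q (i+1) + a2 i • Q i + a3 i • R i := by
    intro i hi
    rw [hDyy i (n-i), map_add, Derivation.map_smul, Derivation.map_smul,
      hDyy (i+1) (n-i), hDyy i (n-i+1)]
    have e1 : n + 1 - (i+1) = n - i := by omega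
    have e2 : n + 1 - (n - i) = i + 1 := by omega
    have e3 : n - i + 1 = n + 1 - i := by omega
    have e4 : n + 1 - (n + 1 - i) = i := by omega
    have e5 : n + 1 - i + 1 = n + 2 - i := by omega
    simp only [hQ_def, hR_def, ha1_def, ha2_def, ha3_def]
    rw [e1, e2, e3, e4, e5]
    match_scalars <;> push_cast <;> ring
  -- rewrite f'
  have hcn1 : c (n+1) = 0 := by
    simp [hc_def, Nat.choose_eq_zero_of_lt (by omega : n < n+1)]
  have hcn2 : c (n+2) = 0 := by
    simp [hc_def, Nat.choose_eq_zero_of_lt (by omega : n < n+2)]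
  have hf'2 : f' = (2:k)⁻¹ • ∑ i ∈ range (n+1), c i • (y i * y (n - i)) := by
    rw [hf']
    congr 1
    have step1 : ∀ i : Fin (2*m),
        (((-1:k) ^ (i:ℕ)) * ((2*m-2).choose (i:ℕ) : k)) •
          (X i * X (⟨2*m-2-(i:ℕ), by omega⟩ : Fin (2*m)))
          = c (i:ℕ) • (y (i:ℕ) * y (n - (i:ℕ))) := by
      intro i
      have h1 : y (i:ℕ) = X i := by rw [hylt _ i.isLt]
      have h2 : y (n - (i:ℕ)) = X (⟨2*m-2-(i:ℕ), by omega⟩ : Fin (2*m)) := by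
        rw [hylt _ (show n - (i:ℕ) < 2*m by omega)]
        exact congrArg X (Fin.ext (by simp; omega))
      have h3 : (2*m-2).choose (i:ℕ) = n.choose (i:ℕ) := by
        congr 1
        omega
      rw [h1, h2, h3, hc_def]
    calc (∑ i : Fin (2*m), (((-1:k) ^ (i:ℕ)) * ((2*m-2).choose (i:ℕ) : k)) •
          (X i * X (⟨2*m-2-(i:ℕ), by omega⟩ : Fin (2*m))))
        = ∑ i : Fin (2*m), c (i:ℕ) • (y (i:ℕ) * y (n - (i:ℕ))) :=
          Finset.sum_congr rfl (fun i _ => step1 i)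
      _ = ∑ i ∈ range (2*m), c i • (y i * y (n - i)) :=
          Fin.sum_univ_eq_sum_range (fun i => c i • (y i * y (n - i))) (2*m)
      _ = ∑ i ∈ range (n+1), c i • (y i * y (n - i)) := by
          rw [show Finset.range (2*m) = Finset.range ((n+1)+1) from by rw [hn], Finset.sum_range_succ, hcn1]
          simp
  -- D applied twice to f'
  have hiter : (⇑D)^[2] f' = D (D f') := by
    simp [Function.iterate_succ_apply', Function.iterate_zero_apply]
  have hDsum : D f' = (2:k)⁻¹ • ∑ i ∈ range (n+1), c i • D (y i * y (n - i)) := by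
    rw [hf'2, Derivation.map_smul, map_sum]
    congr 1
    exact Finset.sum_congr rfl (fun i _ => Derivation.map_smul D _ _)
  have hDDsum : D (D f') = (2:k)⁻¹ • ∑ i ∈ range (n+1),
      ((c i * a1 i) • Q (i+1) + (c i * a2 i) • Q i + (c i * a3 i) • R i) := by
    rw [hDsum, Derivation.map_smul, map_sum]
    congr 1
    refine Finset.sum_congr rfl (fun i hi => ?_)
    rw [Derivation.map_smul, hD2 i (Nat.lt_succ_iff.mp (Finset.mem_range.mp hi))]
    rw [smul_add, smul_add, smul_smul, smul_smul, smul_smul]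
  -- reindexed sums
  set w1 : ℕ → k := fun j => if j = 0 then 0 else c (j-1) * a1 (j-1) with hw1_def
  have hS1 : ∑ i ∈ range (n+1), (c i * a1 i) • Q (i+1) = ∑ j ∈ range (n+2), w1 j • Q j := by
    rw [Finset.sum_range_succ' (fun j => w1 j • Q j) (n+1)]
    simp [hw1_def]
  have hRQ : ∀ i, R (i+1) = Q i := by
    intro i
    simp only [hR_def, hQ_def]
    rw [show n+2-(i+1) = n+1-i from by omega]
  have hS3 : ∑ i ∈ range (n+1), (c i * a3 i) • R i = ∑ j ∈ range (n+2), (c (j+1) * a3 (j+1)) • Q j := by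
    rw [Finset.sum_range_succ' (fun i => (c i * a3 i) • R i) n]
    rw [Finset.sum_range_succ, Finset.sum_range_succ, hcn1, hcn2]
    have ha30 : a3 0 = 0 := by simp [ha3_def]
    rw [ha30]
    simp only [mul_zero, zero_mul, zero_smul, add_zero]
    exact Finset.sum_congr rfl (fun i _ => by rw [hRQ i])
  have hS2 : ∑ i ∈ range (n+1), (c i * a2 i) • Q i = ∑ j ∈ range (n+2), (c j * a2 j) • Q j := by
    rw [Finset.sum_range_succ (fun j => (c j * a2 j) • Q j) (n+1), hcn1]
    simp
  -- the key coefficient identity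
  have key : ∀ j ∈ range (n+2), w1 j + c j * a2 j + c (j+1) * a3 (j+1) = 2 * c j := by
    intro j hj
    rw [Finset.mem_range] at hj
    match j with
    | 0 =>
      simp only [hw1_def, if_pos rfl, hc_def, ha2_def, ha3_def, Nat.choose_zero_right,
        Nat.choose_one_right, Nat.sub_zero]
      push_cast
      rw [Nat.choose_one_right]
      push_cast
      ring
    | (j'+1) =>
      have hj' : j' ≤ n := by omega
      simp only [hw1_def, Nat.succ_ne_zero, if_false, Nat.add_sub_cancel, hc_def,
        ha1_def, ha2_def, ha3_def]
      by_cases hcase : j' = n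
      · have z1 : n.choose (j'+1) = 0 := Nat.choose_eq_zero_of_lt (by omega)
        have z2 : n.choose (j'+1+1) = 0 := Nat.choose_eq_zero_of_lt (by omega)
        have z3 : n - j' = 0 := by omega
        rw [z1, z2, z3]
        push_cast
        ring
      · have hj'' : j' < n := lt_of_le_of_ne hj' hcase
        have h1 : (n.choose (j'+1) : k) * ((j':k)+1) = (n.choose j' : k) * ((n:k) - (j':k)) := by
          have h := congrArg (Nat.cast : ℕ → k) (Nat.choose_succ_right_eq n j')
          push_cast [Nat.cast_sub hj''.le] at h
          linear_combination h
        have h2 : (n.choose (j'+2) : k) * ((j':k)+2) = (n.choose (j'+1) : k) * ((n:k) - (j':k) - 1) := by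
          have h := congrArg (Nat.cast : ℕ → k) (Nat.choose_succ_right_eq n (j'+1))
          push_cast [Nat.cast_sub (by omega : j'+1 ≤ n)] at h
          linear_combination h
        have e1 : n+1-(j'+1) = n - j' := by omega
        have c1 : ((n+1-j' : ℕ):k) = (n:k)+1-(j':k) := by
          rw [Nat.cast_sub (by omega)]
          push_cast
          ring
        have c2 : ((n-j' : ℕ):k) = (n:k)-(j':k) := by
          rw [Nat.cast_sub (by omega)]
        rw [e1, c1, c2]
        push_cast
        linear_combination (-(((-1:k)^j') * ((n:k)+1-(j':k)))) * h1 + (((-1:k)^j') * ((j':k)+3)) * h2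
  -- combine the three sums
  have hbig : ∑ i ∈ range (n+1), ((c i * a1 i) • Q (i+1) + (c i * a2 i) • Q i + (c i * a3 i) • R i)
      = (2:k) • ∑ j ∈ range (n+1), c j • Q j := by
    rw [Finset.sum_add_distrib, Finset.sum_add_distrib, hS1, hS2, hS3,
      ← Finset.sum_add_distrib, ← Finset.sum_add_distrib]
    have : ∀ j ∈ range (n+2), w1 j • Q j + (c j * a2 j) • Q j + (c (j+1) * a3 (j+1)) • Q j
        = (2:k) • (c j • Q j) := by
      intro j hj
      rw [← add_smul, ← add_smul, key j hj, smul_smul, mul_smul]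
    rw [Finset.sum_congr rfl this, ← Finset.smul_sum]
    congr 1
    rw [Finset.sum_range_succ, hcn1]
    simp
  -- the sigma side
  have hσyy : ∀ i : ℕ, i ≤ n → σ (y i * y (n-i)) = Q i := by
    intro i hi
    rw [map_mul]
    have h1 : σ (y i) = y (n+1-i) := by
      rw [hylt i (by omega), hσ, hylt (n+1-i) (by omega)]
      exact congrArg X (Fin.ext (by simp [Fin.val_rev]; omega))
    have h2 : σ (y (n-i)) = y (i+1) := by
      rw [hylt (n-i) (by omega), hσ, hylt (i+1) (by omega)]
      exact congrArg X (Fin.ext (by simp [Fin.val_rev]; omega))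
    rw [h1, h2, hQ_def]
    exact mul_comm _ _
  have hσf : σ f' = (2:k)⁻¹ • ∑ i ∈ range (n+1), c i • Q i := by
    rw [hf'2, map_smul, map_sum]
    congr 1
    refine Finset.sum_congr rfl (fun i hi => ?_)
    rw [map_smul, hσyy i (Nat.lt_succ_iff.mp (Finset.mem_range.mp hi))]
  -- final assembly
  rw [hiter]
  rw [hDDsum]
  rw [hbig]
  rw [hσf]
  rw [← Nat.cast_smul_eq_nsmul k 2]
  rw [smul_smul, smul_smul]
  norm_num
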